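/- arXiv:2305.13956 — 6 statements merged into one kernel-verified Lean document; each statement's English description precedes it below -/
import Mathlib

section
/- If a choice function C_f on subsets of a finite set W satisfies substitutability (for all S' ⊆ S ⊆ W, C_f(S) ∩ S' ⊆ C_f(S')) and consistency (C_f(S') = C_f(S) whenever C_f(S) ⊆ S' ⊆ S), then C_f is path independent: for all S, S' ⊆ W, C_f(S ∪ S') = C_f(C_f(S) ∪ S'). -/
/-- A substitutable and consistent choice function on subsets of a
finite set `W` is path independent: `C (S ∪ S') = C (C S ∪ S')`. -/
theorem path_independence_of_substitutable_consistent
    {W : Type*} [Fintype W] [DecidableEq W] (Cf : Finset W → Finset W)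
    (hchoice : ∀ S : Finset W, Cf S ⊆ S)
    (hsubst : ∀ S' S : Finset W, S' ⊆ S → Cf S ∩ S' ⊆ Cf S')
    (hcons : ∀ S' S : Finset W, Cf S ⊆ S' → S' ⊆ S → Cf S' = Cf S) :
    ∀ S S' : Finset W, Cf (S ∪ S') = Cf (Cf S ∪ S') := by
  intro S S'
  have hsub : Cf (S ∪ S') ⊆ Cf S ∪ S' := by
    intro x hx
    by_cases hx' : x ∈ S'
    · exact Finset.mem_union_right _ hx'
    · have hxS : x ∈ S := by
        rcases Finset.mem_union.mp (hchoice _ hx) with h | h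
        · exact h
        · exact absurd h hx'
      exact Finset.mem_union_left _
        (hsubst S (S ∪ S') Finset.subset_union_left (Finset.mem_inter.mpr ⟨hx, hxS⟩))
  exact (hcons (Cf S ∪ S') (S ∪ S') hsub
    (Finset.union_subset_union_left (hchoice S))).symm
end

section
/- Let ψ be a stable matching rule (ψ(P',C') is stable under (P',C') for every profile). If (P', C') is a Nash equilibrium of the game (ψ, P, C), then the matching ψ(P', C') is individually rational under the true profile (P, C). -/
/-! Common set-up for a many-to-one matching market.  `W` is the (finite) set of
workers and `F` the set of firms.  Each worker `w` has a strict preference over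
`F ∪ {∅}`, modelled as a linear order `P w : LinearOrder (Option F)` (where
`none` stands for being unmatched and `L.lt a b` means `b` is strictly
preferred to `a`).  Each firm `f` has a choice function
`C f : Finset W → Finset W`. -/

/-- A many-to-one matching. -/
structure Matching (W F : Type*) where
  /-- the firm (if any) assigned to each worker -/
  workerOf : W → Option F
  /-- the set of workers assigned to each firm -/
  firmOf : F → Finset W
  /-- `w` works for `f` iff `f` is `w`'s firm -/
  consistent : ∀ w f, w ∈ firmOf f ↔ workerOf w = some f

variable {W F : Type*} [DecidableEq W]

/-- A choice function: `Cf S ⊆ S`, and substitutability. -/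
def SubChoice (Cf : Finset W → Finset W) : Prop :=
  (∀ S, Cf S ⊆ S) ∧ ∀ S' S : Finset W, S' ⊆ S → Cf S ∩ S' ⊆ Cf S'

/-- Consistency of a choice function. -/
def ConsistentChoice (Cf : Finset W → Finset W) : Prop :=
  ∀ S' S : Finset W, Cf S ⊆ S' → S' ⊆ S → Cf S' = Cf S

/-- The law of aggregate demand. -/
def LAD (Cf : Finset W → Finset W) : Prop :=
  ∀ S' S : Finset W, S' ⊆ S → (Cf S').card ≤ (Cf S).card

/-- Individual rationality: no worker prefers being unmatched to her assignment,
and no firm wants to fire any of its workers. -/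
def IndRational (P : W → LinearOrder (Option F)) (C : F → Finset W → Finset W)
    (μ : Matching W F) : Prop :=
  (∀ w : W, ¬ (P w).lt (μ.workerOf w) none) ∧
    ∀ f : F, C f (μ.firmOf f) = μ.firmOf f

/-- Stability: individual rationality plus absence of blocking firm-worker pairs. -/
def Stable (P : W → LinearOrder (Option F)) (C : F → Finset W → Finset W)
    (μ : Matching W F) : Prop :=
  IndRational P C μ ∧
    ¬ ∃ (f : F) (w : W), w ∉ μ.firmOf f ∧ w ∈ C f (insert w (μ.firmOf f)) ∧
      (P w).lt (μ.workerOf w) (some f)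

variable [DecidableEq F]

/-- A Nash equilibrium of the game `(ψ, P, C)` in which both workers and firms
play strategically: no worker can obtain a strictly `P_w`-better firm by a
unilateral misreport and no firm can obtain a Blair-`⪰_f`-better (w.r.t. its
true choice function `C_f`) set of workers by unilaterally misreporting a
substitutable choice function. -/
def NashEq (P : W → LinearOrder (Option F)) (C : F → Finset W → Finset W)
    (ψ : (W → LinearOrder (Option F)) → (F → Finset W → Finset W) → Matching W F)
    (P' : W → LinearOrder (Option F)) (C' : F → Finset W → Finset W) : Prop :=
  (∀ (w : W) (Pw : LinearOrder (Option F)),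
      ¬ (P w).lt ((ψ P' C').workerOf w)
        ((ψ (Function.update P' w Pw) C').workerOf w)) ∧
    ∀ (f : F) (Cf : Finset W → Finset W), SubChoice Cf →
      (ψ P' C').firmOf f =
        C f ((ψ P' C').firmOf f ∪ (ψ P' (Function.update C' f Cf)).firmOf f)

/-! A worker who ranks some firm below unemployment can deviate to a report that puts `∅` on
top; individual rationality of the stable outcome then leaves her unmatched, and the
equilibrium condition says this is not strictly better for her. A firm can "deviate" to its own
reported choice function, and the equilibrium condition for that deviation reads
`μ(f) = C_f(μ(f))`. -/

namespace LinearOrder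

variable {α : Type*} [DecidableEq α]

@[reducible] def withTopAt (L : LinearOrder α) (a : α) : LinearOrder α :=
  letI : LinearOrder (Lex (Bool × α)) := @Prod.Lex.instLinearOrder Bool α _ L
  LinearOrder.lift' (fun x => toLex (decide (x = a), x))
    (fun _ _ h => (Prod.mk.injEq _ _ _ _ ▸ congrArg ofLex h).2)

theorem withTopAt_lt (L : LinearOrder α) {a b : α} (hb : b ≠ a) : (withTopAt L a).lt b a :=
  show Prod.Lex (· < ·) L.lt (decide (b = a), b) (decide (a = a), a) from
    Prod.Lex.left _ _ (by simp [hb])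

end LinearOrder

theorem IndRational.workerOf_eq_none_of_none_top {W F : Type*} {P : W → LinearOrder (Option F)}
    {C : F → Finset W → Finset W} {μ : Matching W F} (hμ : IndRational P C μ) {w : W}
    (htop : ∀ a, a ≠ none → (P w).lt a none) : μ.workerOf w = none := by
  by_contra hne
  exact hμ.1 w (htop _ hne)

namespace NashEq

variable {P P' : W → LinearOrder (Option F)} {C C' : F → Finset W → Finset W}
  {ψ : (W → LinearOrder (Option F)) → (F → Finset W → Finset W) → Matching W F}

theorem not_lt_none (hNE : NashEq P C ψ P' C')
    (hψ : ∀ w Pw, IndRational (Function.update P' w Pw) C' (ψ (Function.update P' w Pw) C'))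
    (w : W) : ¬ (P w).lt ((ψ P' C').workerOf w) none := by
  let Pw := LinearOrder.withTopAt (P' w) none
  have hunmatched : (ψ (Function.update P' w Pw) C').workerOf w = none :=
    (hψ w Pw).workerOf_eq_none_of_none_top fun _ ha => by
      rw [Function.update_self]
      exact LinearOrder.withTopAt_lt (P' w) ha
  simpa only [hunmatched] using hNE.1 w Pw

theorem choice_firmOf (hNE : NashEq P C ψ P' C') (hC' : ∀ f, SubChoice (C' f)) (f : F) :
    C f ((ψ P' C').firmOf f) = (ψ P' C').firmOf f := by
  have h := hNE.2 f (C' f) (hC' f)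
  rw [Function.update_eq_self, Finset.union_self] at h
  exact h.symm

end NashEq

theorem nashEq_indRational_general
    (P : W → LinearOrder (Option F)) (C : F → Finset W → Finset W)
    (ψ : (W → LinearOrder (Option F)) → (F → Finset W → Finset W) → Matching W F)
    (hψ : ∀ P' C', (∀ f, SubChoice (C' f)) → Stable P' C' (ψ P' C'))
    (P' : W → LinearOrder (Option F)) (C' : F → Finset W → Finset W)
    (hC' : ∀ f, SubChoice (C' f))
    (hNE : NashEq P C ψ P' C') :
    IndRational P C (ψ P' C') :=
  ⟨hNE.not_lt_none fun _ _ => (hψ _ C' hC').1, hNE.choice_firmOf hC'⟩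

/-- If `ψ` is a stable rule and `(P', C')` is a Nash
equilibrium of the game `(ψ, P, C)`, then `ψ(P', C')` is individually rational
under the true profile `(P, C)`. -/
theorem nashEq_indRational
    (P : W → LinearOrder (Option F)) (C : F → Finset W → Finset W)
    (hC : ∀ f, SubChoice (C f))
    (ψ : (W → LinearOrder (Option F)) → (F → Finset W → Finset W) → Matching W F)
    (hψ : ∀ P' C', (∀ f, SubChoice (C' f)) → Stable P' C' (ψ P' C'))
    (P' : W → LinearOrder (Option F)) (C' : F → Finset W → Finset W)
    (hC' : ∀ f, SubChoice (C' f))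
    (hNE : NashEq P C ψ P' C') :
    IndRational P C (ψ P' C') :=
  nashEq_indRational_general P C ψ hψ P' C' hC' hNE
end

section
/- For every stable matching rule ψ and every market (P, C) with substitutable firm choice functions, and for every individually rational matching μ ∈ I(P,C), there exists a strategy profile (P*, C*) that is a Nash equilibrium of the game (ψ, P, C) with ψ(P*, C*) = μ. Consequently, the game (ψ, P, C) implements the individually rational correspondence in Nash equilibrium. -/
variable {W F : Type*} [DecidableEq W]

variable [DecidableEq F]

/-!
Every Nash equilibrium outcome is individually rational: a worker can guarantee herself
unemployment by declaring every firm unacceptable, and a firm `f` matched to `S` could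
report `C_f` truthfully, so that `S = C_f (S ∪ S')` for some `S'` and substitutability
forces `C_f S = S`.

Conversely, for `μ ∈ I(P,C)` let every worker declare `μ(w)` as her only acceptable firm
and every firm `f` report `S ↦ S ∩ μ_f`. The only stable matching of this profile is `μ`,
and after any unilateral deviation every stable matching is still a submatching of `μ`:
deviating can only cost partners, never gain new ones, and by individual rationality of
`μ` losing partners is no gain.
-/

def acceptOnlyRank (t x : Option F) : ℕ := if x = t then 2 else if x = none then 1 else 0

/-- The report declaring `t` the only acceptable alternative; ties of `acceptOnlyRank` are
broken by `L`. -/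
def acceptOnly (L : LinearOrder (Option F)) (t : Option F) : LinearOrder (Option F) :=
  letI := L
  LinearOrder.lift' (fun x => toLex (acceptOnlyRank t x, x))
    (fun _ _ h => congrArg (fun p : ℕ ×ₗ Option F => (ofLex p).2) h)

section AcceptOnly

variable {L : LinearOrder (Option F)} {t a b : Option F}

theorem acceptOnly_lt_of_rank_lt (h : acceptOnlyRank t a < acceptOnlyRank t b) :
    (acceptOnly L t).lt a b :=
  letI := L
  show toLex (acceptOnlyRank t a, a) < toLex (acceptOnlyRank t b, b) from
    Prod.Lex.lt_iff.mpr (Or.inl h)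

theorem eq_or_eq_none_of_not_acceptOnly_lt_none (h : ¬ (acceptOnly L t).lt a none) :
    a = t ∨ a = none := by
  by_contra! ha
  refine h (acceptOnly_lt_of_rank_lt ?_)
  unfold acceptOnlyRank
  split_ifs <;> simp_all

theorem none_lt_acceptOnly (ht : t ≠ none) : (acceptOnly L t).lt none t :=
  acceptOnly_lt_of_rank_lt (by simp [acceptOnlyRank, ht.symm])

end AcceptOnly

namespace Matching

omit [DecidableEq W] [DecidableEq F]

theorem ext_workerOf {μ ν : Matching W F} (h : ∀ w, μ.workerOf w = ν.workerOf w) :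
    μ = ν := by
  have hw : μ.workerOf = ν.workerOf := funext h
  have hf : μ.firmOf = ν.firmOf := funext fun f => Finset.ext fun w => by
    rw [μ.consistent, ν.consistent, hw]
  cases μ; cases ν; simp_all

theorem firmOf_subset_iff {μ ν : Matching W F} :
    (∀ f, ν.firmOf f ⊆ μ.firmOf f) ↔
      ∀ w, ν.workerOf w = μ.workerOf w ∨ ν.workerOf w = none := by
  constructor
  · intro h w
    cases hw : ν.workerOf w with
    | none => exact Or.inr rfl
    | some f => exact Or.inl ((μ.consistent w f).mp (h f ((ν.consistent w f).mpr hw))).symm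
  · intro h f w hw
    rcases h w with hμ | hnone <;> rw [ν.consistent] at hw
    · rwa [μ.consistent, ← hμ]
    · simp [hw] at hnone

def acceptOnlyProfile (μ : Matching W F) (L : W → LinearOrder (Option F)) :
    W → LinearOrder (Option F) :=
  fun w => acceptOnly (L w) (μ.workerOf w)

def restrictChoice (μ : Matching W F) : F → Finset W → Finset W :=
  fun f S => S ∩ μ.firmOf f

end Matching

theorem subChoice_inter_right (T : Finset W) : SubChoice (· ∩ T) :=
  ⟨fun _ => Finset.inter_subset_left, fun _ _ _ _ hx => by
    simp only [Finset.mem_inter] at hx ⊢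
    exact ⟨hx.2, hx.1.2⟩⟩

def IsStableRule
    (ψ : (W → LinearOrder (Option F)) → (F → Finset W → Finset W) → Matching W F) :
    Prop :=
  ∀ P' C', (∀ f, SubChoice (C' f)) → Stable P' C' (ψ P' C')

section Submatching

variable {μ ν : Matching W F}

omit [DecidableEq F] in
theorem Matching.firmOf_subset_of_indRational_restrictChoice {P' : W → LinearOrder (Option F)}
    (h : IndRational P' μ.restrictChoice ν) (f : F) : ν.firmOf f ⊆ μ.firmOf f :=
  Finset.inter_eq_left.mp (h.2 f)

omit [DecidableEq W] in
theorem Matching.firmOf_subset_of_indRational_acceptOnlyProfile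
    {L : W → LinearOrder (Option F)} {C' : F → Finset W → Finset W}
    (h : IndRational (μ.acceptOnlyProfile L) C' ν) (f : F) : ν.firmOf f ⊆ μ.firmOf f :=
  Matching.firmOf_subset_iff.mpr (fun w => eq_or_eq_none_of_not_acceptOnly_lt_none (h.1 w)) f

omit [DecidableEq W] [DecidableEq F] in
theorem IndRational.not_lt_workerOf_of_firmOf_subset {P : W → LinearOrder (Option F)}
    {C : F → Finset W → Finset W} (hμ : IndRational P C μ)
    (h : ∀ f, ν.firmOf f ⊆ μ.firmOf f)
    (w : W) : ¬ (P w).lt (μ.workerOf w) (ν.workerOf w) := by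
  rcases Matching.firmOf_subset_iff.mp h w with hν | hν <;> rw [hν]
  · exact @lt_irrefl _ (P w).toPreorder _
  · exact hμ.1 w

theorem Matching.eq_of_stable_acceptOnlyProfile {L : W → LinearOrder (Option F)}
    (h : Stable (μ.acceptOnlyProfile L) μ.restrictChoice ν) : ν = μ := by
  refine Matching.ext_workerOf fun w => ?_
  rcases eq_or_eq_none_of_not_acceptOnly_lt_none (h.1.1 w) with hν | hν
  · exact hν
  cases hμ : μ.workerOf w with
  | none => exact hν
  | some f =>
    -- otherwise `(f, w)` blocks `ν`
    refine absurd ⟨f, w, ?_, ?_, ?_⟩ h.2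
    · simp [ν.consistent, hν]
    · simp [Matching.restrictChoice, μ.consistent, hμ]
    · rw [hν, Matching.acceptOnlyProfile, hμ]
      exact none_lt_acceptOnly (Option.some_ne_none f)

end Submatching

section Equilibrium

variable {P : W → LinearOrder (Option F)} {C : F → Finset W → Finset W}
  {ψ : (W → LinearOrder (Option F)) → (F → Finset W → Finset W) → Matching W F}

theorem subChoice_update {C' : F → Finset W → Finset W} (hC' : ∀ f, SubChoice (C' f)) (f : F)
    {Cf : Finset W → Finset W} (hCf : SubChoice Cf) :
    ∀ g, SubChoice (Function.update C' f Cf g) :=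
  Function.forall_update_iff C' (p := fun _ => SubChoice) |>.mpr ⟨hCf, fun g _ => hC' g⟩

theorem NashEq.indRational (hC : ∀ f, SubChoice (C f)) (hψ : IsStableRule ψ)
    {P' : W → LinearOrder (Option F)} {C' : F → Finset W → Finset W}
    (hC' : ∀ f, SubChoice (C' f)) (h : NashEq P C ψ P' C') : IndRational P C (ψ P' C') := by
  refine ⟨fun w hlt => ?_, fun f => ?_⟩
  · have hquit := (hψ (Function.update P' w (acceptOnly (P w) none)) C' hC').1.1 w
    rw [Function.update_self] at hquit
    have hnone := (eq_or_eq_none_of_not_acceptOnly_lt_none hquit).elim id id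
    have hno_gain := h.1 w (acceptOnly (P w) none)
    rw [hnone] at hno_gain
    exact hno_gain hlt
  · set S := (ψ P' C').firmOf f
    have heq := h.2 f (C f) (hC f)
    have hkeep := (hC f).2 S _
      (Finset.subset_union_left (s₂ := (ψ P' (Function.update C' f (C f))).firmOf f))
    rw [← heq, Finset.inter_self] at hkeep
    exact ((hC f).1 S).antisymm hkeep

theorem stableRule_acceptOnlyProfile_restrictChoice (hψ : IsStableRule ψ) (μ : Matching W F)
    (L : W → LinearOrder (Option F)) : ψ (μ.acceptOnlyProfile L) μ.restrictChoice = μ :=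
  Matching.eq_of_stable_acceptOnlyProfile
    (hψ _ _ fun f => subChoice_inter_right (μ.firmOf f))

theorem nashEq_acceptOnlyProfile_restrictChoice (hψ : IsStableRule ψ) {μ : Matching W F}
    (hμ : IndRational P C μ) : NashEq P C ψ (μ.acceptOnlyProfile P) μ.restrictChoice := by
  have hrestrict : ∀ f, SubChoice (μ.restrictChoice f) := fun f =>
    subChoice_inter_right (μ.firmOf f)
  rw [NashEq, stableRule_acceptOnlyProfile_restrictChoice hψ]
  refine ⟨fun w Pw => ?_, fun f Cf hCf => ?_⟩
  · exact hμ.not_lt_workerOf_of_firmOf_subset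
      (Matching.firmOf_subset_of_indRational_restrictChoice (hψ _ _ hrestrict).1) w
  · have hsub := Matching.firmOf_subset_of_indRational_acceptOnlyProfile
      (hψ (μ.acceptOnlyProfile P) _ (subChoice_update hrestrict f hCf)).1 f
    rw [Finset.union_eq_left.mpr hsub]
    exact (hμ.2 f).symm

end Equilibrium

/-- For every stable rule `ψ` and market `(P, C)` with
substitutable firm choice functions, the game `(ψ, P, C)` implements the
individually rational correspondence in Nash equilibrium: every Nash
equilibrium outcome is individually rational under `(P, C)`, and every
individually rational matching `μ ∈ I(P,C)` is the outcome `ψ(P*, C*)` of some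
Nash equilibrium `(P*, C*)` (with substitutable reported choice functions). -/
theorem stable_rule_implements_indRational
    (P : W → LinearOrder (Option F)) (C : F → Finset W → Finset W)
    (hC : ∀ f, SubChoice (C f))
    (ψ : (W → LinearOrder (Option F)) → (F → Finset W → Finset W) → Matching W F)
    (hψ : ∀ P' C', (∀ f, SubChoice (C' f)) → Stable P' C' (ψ P' C')) :
    (∀ (P' : W → LinearOrder (Option F)) (C' : F → Finset W → Finset W),
        (∀ f, SubChoice (C' f)) → NashEq P C ψ P' C' →
          IndRational P C (ψ P' C')) ∧
      ∀ μ : Matching W F, IndRational P C μ →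
        ∃ (Pstar : W → LinearOrder (Option F)) (Cstar : F → Finset W → Finset W),
          (∀ f, SubChoice (Cstar f)) ∧ NashEq P C ψ Pstar Cstar ∧
            ψ Pstar Cstar = μ :=
  ⟨fun _ _ hC' h => h.indRational hC hψ hC', fun μ hμ =>
    ⟨μ.acceptOnlyProfile P, μ.restrictChoice, fun f => subChoice_inter_right (μ.firmOf f),
      nashEq_acceptOnlyProfile_restrictChoice hψ hμ,
      stableRule_acceptOnlyProfile_restrictChoice hψ μ P⟩⟩
end

section
/- In the worker-strategic game with the firm-optimal stable rule ψ^C_F, suppose C ∈ C_LAD (each C_f substitutable and satisfying the law of aggregate demand). If P' is a Nash equilibrium of (ψ^C_F, P), then ψ^C_F(P') is a stable matching under the true profile (P, C). -/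
variable {W F : Type*} [DecidableEq W]

/-- `ψF` is the firm-optimal stable rule for the fixed profile of firm choice
functions `C`: for each reported worker profile it yields a stable matching
which every firm weakly prefers, in Blair's order, to any other stable
matching. -/
def FirmOptimalStableRule (C : F → Finset W → Finset W)
    (ψF : (W → LinearOrder (Option F)) → Matching W F) : Prop :=
  ∀ P' : W → LinearOrder (Option F),
    Stable P' C (ψF P') ∧
      ∀ ν : Matching W F, Stable P' C ν →
        ∀ f : F, (ψF P').firmOf f = C f ((ψF P').firmOf f ∪ ν.firmOf f)


/-- Auxiliary: the linear order obtained from `L` by moving `t` to the top. -/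
def moveTop {F : Type*} [DecidableEq F] (L : LinearOrder (Option F)) (t : Option F) :
    LinearOrder (Option F) :=
  letI := L
  LinearOrder.lift'
    (fun x => if x = t then (⊤ : WithTop (Option F)) else (x : WithTop (Option F)))
    (by
      intro a b h
      dsimp only at h
      split_ifs at h with h1 h2
      · exact h1.trans h2.symm
      · exact absurd h.symm WithTop.coe_ne_top
      · exact absurd h WithTop.coe_ne_top
      · exact WithTop.coe_injective h)

theorem moveTop_lt_def {F : Type*} [DecidableEq F] (L : LinearOrder (Option F))
    (t x y : Option F) :
    (moveTop L t).lt x y ↔ (letI := L;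
      (if x = t then (⊤ : WithTop (Option F)) else (x : WithTop (Option F))) <
      (if y = t then (⊤ : WithTop (Option F)) else (y : WithTop (Option F)))) :=
  Iff.rfl

theorem moveTop_lt_top {F : Type*} [DecidableEq F] (L : LinearOrder (Option F))
    (t x : Option F) (hx : x ≠ t) : (moveTop L t).lt x t := by
  rw [moveTop_lt_def]
  letI := L
  simp [hx]

theorem moveTop_not_top_lt {F : Type*} [DecidableEq F] (L : LinearOrder (Option F))
    (t y : Option F) : ¬ (moveTop L t).lt t y := by
  rw [moveTop_lt_def]
  letI := L
  simp only [if_pos rfl]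
  exact not_top_lt

theorem moveTop_lt_iff {F : Type*} [DecidableEq F] (L : LinearOrder (Option F))
    (t x y : Option F) (hx : x ≠ t) (hy : y ≠ t) :
    (moveTop L t).lt x y ↔ L.lt x y := by
  rw [moveTop_lt_def]
  letI := L
  simp only [if_neg hx, if_neg hy]
  exact WithTop.coe_lt_coe

/-- Suppose each `C_f` is substitutable, consistent and
satisfies the law of aggregate demand, and only workers play strategically.
If `P'` is a Nash equilibrium of the game `(ψ^C_F, P)`, then `ψ^C_F(P')` is a
stable matching under the true profile `(P, C)`. -/
theorem workers_nashEq_stable [DecidableEq F]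
    (P : W → LinearOrder (Option F)) (C : F → Finset W → Finset W)
    (hC : ∀ f, SubChoice (C f) ∧ ConsistentChoice (C f) ∧ LAD (C f))
    (ψF : (W → LinearOrder (Option F)) → Matching W F)
    (hψF : FirmOptimalStableRule C ψF)
    (P' : W → LinearOrder (Option F))
    (hNE : ∀ (w : W) (Pw : LinearOrder (Option F)),
      ¬ (P w).lt ((ψF P').workerOf w)
        ((ψF (Function.update P' w Pw)).workerOf w)) :
    Stable P C (ψF P') := by
  have hμst := (hψF P').1
  constructor
  · constructor
    · -- workers' individual rationality under the true preferences
      intro w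
      set Pw := moveTop (P' w) none with hPwdef
      have hst := (hψF (Function.update P' w Pw)).1
      have hIR := hst.1.1 w
      rw [Function.update_self] at hIR
      have hnone : (ψF (Function.update P' w Pw)).workerOf w = none := by
        cases hcase : (ψF (Function.update P' w Pw)).workerOf w with
        | none => rfl
        | some a =>
          rw [hcase] at hIR
          exact absurd (moveTop_lt_top (P' w) none (some a) (by simp)) hIR
      have := hNE w Pw
      rwa [hnone] at this
    · exact hμst.1.2
  · rintro ⟨f, w, hwf, hwC, hlt⟩
    set Pw := moveTop (P' w) (some f) with hPwdef
    set P'' := Function.update P' w Pw with hP''def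
    have hμ'st := (hψF P'').1
    have hP''w : P'' w = Pw := Function.update_self w Pw P'
    have hP''v : ∀ v, v ≠ w → P'' v = P' v := fun v hv => Function.update_of_ne hv Pw P'
    -- step 1 : w is not matched to f in μ'
    have h1 : (ψF P'').workerOf w ≠ some f := by
      intro h
      exact hNE w Pw (h ▸ hlt)
    have h1' : w ∉ (ψF P'').firmOf f := fun h => h1 (((ψF P'').consistent w f).1 h)
    -- step 2 : f rejects w at μ'
    have h2 : w ∉ C f (insert w ((ψF P'').firmOf f)) := by
      intro hmem
      exact hμ'st.2 ⟨f, w, h1', hmem, by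
        rw [hP''w]
        exact moveTop_lt_top (P' w) (some f) _ h1⟩
    -- step 3 : μ' is stable under P'
    have h3 : Stable P' C (ψF P'') := by
      refine ⟨⟨?_, hμ'st.1.2⟩, ?_⟩
      · intro v
        by_cases hv : v = w
        · subst hv
          cases hcase : (ψF P'').workerOf v with
          | none =>
            intro h
            exact absurd h (by letI := P' v; exact lt_irrefl none)
          | some g =>
            have hg : (some g : Option F) ≠ some f := hcase ▸ h1
            have hir := hμ'st.1.1 v
            rw [hP''w, hcase] at hir
            intro hlt'
            exact hir ((moveTop_lt_iff (P' v) (some f) (some g) none hg (by simp)).2 hlt')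
        · have := hμ'st.1.1 v
          rwa [hP''v v hv] at this
      · rintro ⟨g, v, hv1, hv2, hv3⟩
        by_cases hv : v = w
        · subst hv
          by_cases hg : g = f
          · subst hg; exact h2 hv2
          · refine hμ'st.2 ⟨g, v, hv1, hv2, ?_⟩
            rw [hP''w]
            refine (moveTop_lt_iff (P' v) (some f) _ _ h1 (by simpa using hg)).2 hv3
        · exact hμ'st.2 ⟨g, v, hv1, hv2, by rwa [hP''v v hv]⟩
    -- step 4 : Blair domination
    have h4 : (ψF P').firmOf f = C f ((ψF P').firmOf f ∪ (ψF P'').firmOf f) :=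
      (hψF P').2 (ψF P'') h3 f
    obtain ⟨⟨hsub1, hsub2⟩, hcons, -⟩ := hC f
    set A := (ψF P').firmOf f with hAdef
    set A' := (ψF P'').firmOf f with hA'def
    set S := insert w (A ∪ A') with hSdef
    -- step 6 : f accepts w from the big pool
    have h6 : w ∈ C f S := by
      by_contra h6
      have hCS : C f S ⊆ A ∪ A' := by
        intro x hx
        rcases Finset.mem_insert.1 (hsub1 S hx) with h | h
        · exact absurd (h ▸ hx) h6
        · exact h
      have e1 : C f (A ∪ A') = C f S := hcons (A ∪ A') S hCS (Finset.subset_insert _ _)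
      have e2 : C f S = A := by rw [← e1, ← h4]
      have e3 : C f (insert w A) = C f S :=
        hcons (insert w A) S (e2 ▸ Finset.subset_insert w A)
          (Finset.insert_subset_insert w Finset.subset_union_left)
      rw [e3, e2] at hwC
      exact hwf hwC
    -- step 7 : substitutability yields a contradiction with step 2
    have h7 := hsub2 (insert w A') S (Finset.insert_subset_insert w Finset.subset_union_right)
    exact h2 (h7 (Finset.mem_inter.2 ⟨h6, Finset.mem_insert_self w A'⟩))
end

section
/- Let μ be a stable matching of (P, C) with each C_f substitutable and satisfying LAD. Define P* by: each worker w reports only μ(w) as acceptable. Then μ is the unique stable matching of (P*, C), and P* is a Nash equilibrium of the game (ψ^C_F, P) with ψ^C_F(P*) = μ. -/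
variable {W F : Type*} [DecidableEq W]

/-! Under `P*` the only firm acceptable to `w` is `μ(w)`, so every stable matching `ν` of
`(P*, C)` has `ν_f ⊆ μ_f`; a worker of `μ_f \ ν_f` would be unmatched and chosen by `f`
(substitutability), so `ν = μ`.  If `w` deviates and obtains `f` with `f ≻_w μ(w)`, then `f`
rejects `w` from `μ_f ∪ {w}` (otherwise `(f, w)` blocks `μ`), so `C_f(μ_f ∪ {w}) = μ_f` by
consistency.  Hence `ν_f ≠ μ_f ∪ {w}`, while still `ν_f ⊆ μ_f ∪ {w}`: some worker of `μ_f` is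
dropped, left unmatched and chosen by `f`, and blocks `ν`. -/

theorem Matching.ext_firmOf {α β : Type*} {μ ν : Matching α β}
    (h : ∀ f, μ.firmOf f = ν.firmOf f) : μ = ν := by
  obtain ⟨μw, μf, hμ⟩ := μ
  obtain ⟨νw, νf, hν⟩ := ν
  obtain rfl : μf = νf := funext h
  obtain rfl : μw = νw := funext fun w => Option.ext fun f => by rw [← hμ, ← hν]
  rfl

theorem SubChoice.mem_of_subset {Cf : Finset W → Finset W} (hCf : SubChoice Cf)
    {S' S : Finset W} {w : W} (hS : S' ⊆ S) (hwS : w ∈ Cf S) (hwS' : w ∈ S') : w ∈ Cf S' :=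
  hCf.2 S' S hS (Finset.mem_inter.2 ⟨hwS, hwS'⟩)

theorem ConsistentChoice.choice_insert_eq {Cf : Finset W → Finset W}
    (hcons : ConsistentChoice Cf) (hsub : ∀ S, Cf S ⊆ S) {S : Finset W} {w : W}
    (hS : Cf S = S) (hw : w ∉ Cf (insert w S)) : Cf (insert w S) = S := by
  have hsubset : Cf (insert w S) ⊆ S := fun x hx =>
    (Finset.mem_insert.1 (hsub _ hx)).resolve_left fun hxw => hw (hxw ▸ hx)
  rw [← hcons S _ hsubset (Finset.subset_insert w S), hS]

section Truncation

open Finset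

variable {C : F → Finset W → Finset W} {μ ν : Matching W F} {Pstar : W → LinearOrder (Option F)}

theorem stable_of_truncation
    (hP1 : ∀ (w : W) (f : F), some f ≠ μ.workerOf w → (Pstar w).lt (some f) none)
    (hP2 : ∀ (w : W) (f : F), μ.workerOf w = some f → (Pstar w).lt none (some f))
    (hμ : ∀ f, C f (μ.firmOf f) = μ.firmOf f) : Stable Pstar C μ := by
  have hmax : ∀ w x, ¬ (Pstar w).lt (μ.workerOf w) x := by
    intro w x hlt
    let := Pstar w
    have hnone : ¬ μ.workerOf w < none := by
      cases hμw : μ.workerOf w with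
      | none => exact lt_irrefl _
      | some g => exact (hP2 w g hμw).not_gt
    cases x with
    | none => exact hnone hlt
    | some f => exact hnone (hlt.trans (hP1 w f (ne_of_gt hlt)))
  exact ⟨⟨fun w => hmax w none, hμ⟩, fun ⟨f, w, _, _, hlt⟩ => hmax w (some f) hlt⟩

theorem firmOf_subset_insert_of_indRational
    (hP1 : ∀ (w : W) (f : F), some f ≠ μ.workerOf w → (Pstar w).lt (some f) none)
    {Q : W → LinearOrder (Option F)} {w : W} (hν : IndRational Q C ν)
    (hQ : ∀ x ≠ w, Q x = Pstar x) (f : F) : ν.firmOf f ⊆ insert w (μ.firmOf f) := by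
  intro x hx
  rcases eq_or_ne x w with rfl | hxw
  · exact mem_insert_self x _
  have hacc := hν.1 x
  rw [(ν.consistent x f).1 hx, hQ x hxw] at hacc
  exact mem_insert_of_mem ((μ.consistent x f).2 (not_not.1 (mt (hP1 x f) hacc)).symm)

theorem not_mem_choice_insert_of_stable
    (hP1 : ∀ (w : W) (f : F), some f ≠ μ.workerOf w → (Pstar w).lt (some f) none)
    (hP2 : ∀ (w : W) (f : F), μ.workerOf w = some f → (Pstar w).lt none (some f))
    {Q : W → LinearOrder (Option F)} {x : W} {f : F} (hν : Stable Q C ν)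
    (hQ : Q x = Pstar x) (hx : x ∈ μ.firmOf f) (hxν : x ∉ ν.firmOf f) :
    x ∉ C f (insert x (ν.firmOf f)) := by
  intro hxC
  have hμx : μ.workerOf x = some f := (μ.consistent x f).1 hx
  have hνx : ν.workerOf x = none := by
    cases hνx : ν.workerOf x with
    | none => rfl
    | some g =>
      have hacc := hν.1.1 x
      rw [hνx, hQ] at hacc
      have hgf : some g = some f := hμx ▸ not_not.1 (mt (hP1 x g) hacc)
      exact absurd ((ν.consistent x f).2 (hνx.trans hgf)) hxν
  exact hν.2 ⟨f, x, hxν, hxC, by rw [hνx, hQ]; exact hP2 x f hμx⟩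

theorem eq_of_stable_truncation
    (hP1 : ∀ (w : W) (f : F), some f ≠ μ.workerOf w → (Pstar w).lt (some f) none)
    (hP2 : ∀ (w : W) (f : F), μ.workerOf w = some f → (Pstar w).lt none (some f))
    (hsub : ∀ f, SubChoice (C f)) (hμ : ∀ f, C f (μ.firmOf f) = μ.firmOf f)
    (hν : Stable Pstar C ν) : ν = μ := by
  have hνμ : ∀ f, ν.firmOf f ⊆ μ.firmOf f := fun f x hx =>
    have hacc := hν.1.1 x
    (μ.consistent x f).2 (not_not.1 (mt (hP1 x f) ((ν.consistent x f).1 hx ▸ hacc))).symm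
  refine Matching.ext_firmOf fun f => (hνμ f).antisymm fun x hx => ?_
  by_contra hxν
  refine not_mem_choice_insert_of_stable hP1 hP2 hν rfl hx hxν ?_
  exact (hsub f).mem_of_subset (insert_subset hx (hνμ f)) (by rwa [hμ]) (mem_insert_self x _)

theorem not_lt_workerOf_of_stable_update
    (hP1 : ∀ (w : W) (f : F), some f ≠ μ.workerOf w → (Pstar w).lt (some f) none)
    (hP2 : ∀ (w : W) (f : F), μ.workerOf w = some f → (Pstar w).lt none (some f))
    (hsub : ∀ f, SubChoice (C f)) (hcons : ∀ f, ConsistentChoice (C f))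
    {P : W → LinearOrder (Option F)} (hμ : Stable P C μ) {w : W} {Pw : LinearOrder (Option F)}
    (hν : Stable (Function.update Pstar w Pw) C ν) :
    ¬ (P w).lt (μ.workerOf w) (ν.workerOf w) := by
  intro hlt
  obtain ⟨f, hνw⟩ : ∃ f, ν.workerOf w = some f :=
    Option.ne_none_iff_exists'.1 fun hnone => hμ.1.1 w (hnone ▸ hlt)
  rw [hνw] at hlt
  have hwμ : w ∉ μ.firmOf f := fun h => by
    let := P w
    exact lt_irrefl _ ((μ.consistent w f).1 h ▸ hlt)
  have hCf : C f (insert w (μ.firmOf f)) = μ.firmOf f :=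
    (hcons f).choice_insert_eq (hsub f).1 (hμ.1.2 f) fun hwC => hμ.2 ⟨f, w, hwμ, hwC, hlt⟩
  have hνf := firmOf_subset_insert_of_indRational hP1 hν.1
    (fun x hx => Function.update_of_ne hx Pw Pstar) f
  obtain ⟨x, hxμ, hxν⟩ : ∃ x ∈ μ.firmOf f, x ∉ ν.firmOf f := by
    by_contra! hall
    have hνf_eq : ν.firmOf f = insert w (μ.firmOf f) :=
      hνf.antisymm (insert_subset ((ν.consistent w f).2 hνw) hall)
    have hνC := hν.1.2 f
    rw [hνf_eq, hCf] at hνC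
    exact hwμ (hνC ▸ mem_insert_self w _)
  refine not_mem_choice_insert_of_stable hP1 hP2 hν
    (Function.update_of_ne (ne_of_mem_of_not_mem hxμ hwμ) Pw Pstar) hxμ hxν ?_
  exact (hsub f).mem_of_subset (insert_subset (mem_insert_of_mem hxμ) hνf) (by rwa [hCf])
    (mem_insert_self x _)

end Truncation

theorem truncation_nashEq_of_stable_general
    (P : W → LinearOrder (Option F)) (C : F → Finset W → Finset W)
    (hC : ∀ f, SubChoice (C f) ∧ ConsistentChoice (C f) ∧ LAD (C f))
    (ψF : (W → LinearOrder (Option F)) → Matching W F)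
    (hψF : FirmOptimalStableRule C ψF)
    (μ : Matching W F) (hμ : Stable P C μ)
    (Pstar : W → LinearOrder (Option F))
    -- any firm other than `μ(w)` is unacceptable for `w` under `P*_w`:
    (hP1 : ∀ (w : W) (f : F), some f ≠ μ.workerOf w → (Pstar w).lt (some f) none)
    -- `μ(w)` is acceptable for `w` under `P*_w`:
    (hP2 : ∀ (w : W) (f : F), μ.workerOf w = some f → (Pstar w).lt none (some f)) :
    ({ν : Matching W F | Stable Pstar C ν} = {μ}) ∧
      (∀ (w : W) (Pw : LinearOrder (Option F)),
        ¬ (P w).lt ((ψF Pstar).workerOf w)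
          ((ψF (Function.update Pstar w Pw)).workerOf w)) ∧
      ψF Pstar = μ := by
  have hsub : ∀ f, SubChoice (C f) := fun f => (hC f).1
  have hμstar : Stable Pstar C μ := stable_of_truncation hP1 hP2 hμ.1.2
  have huniq : ∀ ν, Stable Pstar C ν → ν = μ := fun _ hν =>
    eq_of_stable_truncation hP1 hP2 hsub hμ.1.2 hν
  have hψF_eq : ψF Pstar = μ := huniq _ (hψF Pstar).1
  refine ⟨Set.eq_singleton_iff_unique_mem.2 ⟨hμstar, huniq⟩, fun w Pw => ?_, hψF_eq⟩
  rw [hψF_eq]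
  exact not_lt_workerOf_of_stable_update hP1 hP2 hsub (fun f => (hC f).2.1) hμ (hψF _).1

/-- Let `μ` be a stable matching of `(P, C)` with each `C_f`
substitutable, consistent and satisfying LAD, and let `P*` be the profile in
which each worker reports only `μ(w)` as acceptable.  Then `μ` is the unique
stable matching of `(P*, C)`, and `P*` is a Nash equilibrium of the game
`(ψ^C_F, P)` with `ψ^C_F(P*) = μ`. -/
theorem truncation_nashEq_of_stable [DecidableEq F]
    (P : W → LinearOrder (Option F)) (C : F → Finset W → Finset W)
    (hC : ∀ f, SubChoice (C f) ∧ ConsistentChoice (C f) ∧ LAD (C f))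
    (ψF : (W → LinearOrder (Option F)) → Matching W F)
    (hψF : FirmOptimalStableRule C ψF)
    (μ : Matching W F) (hμ : Stable P C μ)
    (Pstar : W → LinearOrder (Option F))
    -- any firm other than `μ(w)` is unacceptable for `w` under `P*_w`:
    (hP1 : ∀ (w : W) (f : F), some f ≠ μ.workerOf w → (Pstar w).lt (some f) none)
    -- `μ(w)` is acceptable for `w` under `P*_w`:
    (hP2 : ∀ (w : W) (f : F), μ.workerOf w = some f → (Pstar w).lt none (some f)) :
    ({ν : Matching W F | Stable Pstar C ν} = {μ}) ∧
      (∀ (w : W) (Pw : LinearOrder (Option F)),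
        ¬ (P w).lt ((ψF Pstar).workerOf w)
          ((ψF (Function.update Pstar w Pw)).workerOf w)) ∧
      ψF Pstar = μ :=
  truncation_nashEq_of_stable_general P C hC ψF hψF μ hμ Pstar hP1 hP2
end

section
/- Let μ be an individually rational matching and let (P*, C*) be the truncation profile where each worker declares only μ(w) acceptable and each firm f has C*_f(S) = μ(f) ∩ S. For any stable rule ψ, no firm f has a profitable unilateral deviation from (P*, C*): for every reported choice function Ĉ_f, every worker in ψ(P*, Ĉ_f, C*_{-f})(f) must belong to μ(f), and hence ψ(P*, C*)(f) = C_f(ψ(P*, C*)(f) ∪ ψ(P*, Ĉ_f, C*_{-f})(f)) whenever C_f(μ(f)) = μ(f). -/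
variable {W F : Type*} [DecidableEq W]

/-- Let `μ` be individually rational and let `(P*, C*)` be
the truncation profile (each worker declares only `μ(w)` acceptable and
`C*_f(S) = μ(f) ∩ S`).  For any stable rule `ψ`, no firm `f` has a profitable
unilateral deviation: for every substitutable report `Ĉ_f`, every worker hired
by `f` in `ψ(P*, (Ĉ_f, C*_{-f}))` already belongs to `μ(f)`, and hence
`ψ(P*,C*)(f) = C_f(ψ(P*,C*)(f) ∪ ψ(P*, (Ĉ_f, C*_{-f}))(f))` whenever
`C_f(μ(f)) = μ(f)`. -/
theorem no_profitable_firm_deviation [DecidableEq F]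
    (P : W → LinearOrder (Option F)) (C : F → Finset W → Finset W)
    (hC : ∀ f, SubChoice (C f) ∧ ConsistentChoice (C f))
    (μ : Matching W F) (hμ : IndRational P C μ)
    (Pstar : W → LinearOrder (Option F))
    (hP1 : ∀ (w : W) (f : F), some f ≠ μ.workerOf w → (Pstar w).lt (some f) none)
    (hP2 : ∀ (w : W) (f : F), μ.workerOf w = some f → (Pstar w).lt none (some f))
    (Cstar : F → Finset W → Finset W)
    (hCstar : ∀ (f : F) (S : Finset W), Cstar f S = μ.firmOf f ∩ S)
    (ψ : (W → LinearOrder (Option F)) → (F → Finset W → Finset W) → Matching W F)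
    (hψ : ∀ P' C', (∀ f, SubChoice (C' f)) → Stable P' C' (ψ P' C'))
    (f : F) (Chat : Finset W → Finset W) (hChat : SubChoice Chat) :
    (∀ w ∈ (ψ Pstar (Function.update Cstar f Chat)).firmOf f, w ∈ μ.firmOf f) ∧
      (C f (μ.firmOf f) = μ.firmOf f →
        (ψ Pstar Cstar).firmOf f =
          C f ((ψ Pstar Cstar).firmOf f ∪
            (ψ Pstar (Function.update Cstar f Chat)).firmOf f)) := by
  set Cdev := Function.update Cstar f Chat with hCdev
  have hCstarSub : ∀ g, SubChoice (Cstar g) := by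
    intro g
    constructor
    · intro S; rw [hCstar]; exact Finset.inter_subset_right
    · intro S' S hS
      rw [hCstar, hCstar]
      intro w hw
      simp only [Finset.mem_inter] at *
      exact ⟨hw.1.1, hw.2⟩
  have hCdevSub : ∀ g, SubChoice (Cdev g) := by
    intro g
    by_cases hg : g = f
    · subst hg; simpa [hCdev] using hChat
    · simpa [hCdev, Function.update_of_ne hg] using hCstarSub g
  have key : ∀ (C' : F → Finset W → Finset W), (∀ g, SubChoice (C' g)) →
      ∀ w g, w ∈ (ψ Pstar C').firmOf g → w ∈ μ.firmOf g := by
    intro C' hC' w g hw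
    have hstab := hψ Pstar C' hC'
    have hIR := hstab.1.1 w
    rw [(ψ Pstar C').consistent] at hw
    rw [hw] at hIR
    by_contra hwf
    have hne : some g ≠ μ.workerOf w := by
      intro h
      exact hwf ((μ.consistent w g).mpr h.symm)
    exact hIR (hP1 w g hne)
  refine ⟨fun w hw => key Cdev hCdevSub w f hw, fun hCf => ?_⟩
  have hsub : (ψ Pstar Cstar).firmOf f ⊆ μ.firmOf f :=
    fun w hw => key Cstar hCstarSub w f hw
  have hstab := hψ Pstar Cstar hCstarSub
  have hsup : μ.firmOf f ⊆ (ψ Pstar Cstar).firmOf f := by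
    intro w hw
    by_contra hwn
    apply hstab.2
    refine ⟨f, w, hwn, ?_, ?_⟩
    · rw [hCstar]
      simp only [Finset.mem_inter]
      exact ⟨hw, Finset.mem_insert_self w _⟩
    · have hwnone : (ψ Pstar Cstar).workerOf w = none := by
        cases h : (ψ Pstar Cstar).workerOf w with
        | none => rfl
        | some g =>
          have hmg := key Cstar hCstarSub w g (((ψ Pstar Cstar).consistent w g).mpr h)
          have hμw : μ.workerOf w = some f := (μ.consistent w f).mp hw
          have hμg : μ.workerOf w = some g := (μ.consistent w g).mp hmg
          rw [hμw] at hμg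
          injection hμg with hgf
          subst hgf
          exact (hwn (((ψ Pstar Cstar).consistent w f).mpr h)).elim
      rw [hwnone]
      exact hP2 w f ((μ.consistent w f).mp hw)
  have heq : (ψ Pstar Cstar).firmOf f = μ.firmOf f := hsub.antisymm hsup
  have hBsub : (ψ Pstar Cdev).firmOf f ⊆ μ.firmOf f :=
    fun w hw => key Cdev hCdevSub w f hw
  rw [heq, Finset.union_eq_left.mpr hBsub, hCf]
end
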